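/- Let E, H₁, H₂ be complex Hilbert spaces and let A ∈ B(E), B₁ ∈ B(H₁, E), B₂ ∈ B(H₂, E), C₁ ∈ B(E, H₁), C₂ ∈ B(E, H₂), D₁ ∈ B(H₁), D₂ ∈ B(H₂, H₁), D₃ ∈ B(H₂), A₁, A₂ ∈ B(E), X₁ ∈ B(E, H₁), Y₂ ∈ B(H₂, E). Suppose the operator U on E ⊕ H₁ ⊕ H₂ defined by U(e, h₁, h₂) = (A e + B₁ h₁ + B₂ h₂, C₁ e + D₁ h₁ + D₂ h₂, C₂ e + D₃ h₂) is an isometry, and that A = A₁ A₂, B₂ = A₁ Y₂, C₁ = X₁ A₂, D₂ = X₁ Y₂, and A₁*A₁ + X₁*X₁ = I_E. Then the operator U₂ on E ⊕ H₂ defined by U₂(e, h₂) = (A₂ e + Y₂ h₂, C₂ e + D₃ h₂) is an isometry. -/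

import Mathlib

/-!
Feed `(e, 0, h₂)` to `U`. By the factorizations, the first two components of the image are
`A₁ w` and `X₁ w` with `w = A₂ e + Y₂ h₂`, and `A₁*A₁ + X₁*X₁ = I` gives
`‖A₁ w‖² + ‖X₁ w‖² = ‖w‖²`. Hence `‖U₂ (e, h₂)‖² = ‖U (e, 0, h₂)‖² = ‖e‖² + ‖h₂‖²`.
-/

open ContinuousLinearMap

/-- The element `(x, y)` of the Hilbert-space direct sum `X ⊕ Y`,
modelled as `WithLp 2 (X × Y)`. -/
noncomputable def mk2 {X Y : Type*} (x : X) (y : Y) : WithLp 2 (X × Y) :=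
  (WithLp.equiv 2 (X × Y)).symm (x, y)

/-- The element `(e, h₁, h₂)` of the Hilbert-space direct sum `E ⊕ H₁ ⊕ H₂`,
modelled as `WithLp 2 (E × WithLp 2 (H₁ × H₂))`. -/
noncomputable def mk3 {E H₁ H₂ : Type*} (e : E) (h₁ : H₁) (h₂ : H₂) :
    WithLp 2 (E × WithLp 2 (H₁ × H₂)) :=
  (WithLp.equiv 2 _).symm (e, (WithLp.equiv 2 (H₁ × H₂)).symm (h₁, h₂))

section Norms

variable {X Y Z : Type*} [SeminormedAddCommGroup X] [SeminormedAddCommGroup Y]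
  [SeminormedAddCommGroup Z]

theorem norm_mk2_sq (x : X) (y : Y) : ‖mk2 x y‖ ^ 2 = ‖x‖ ^ 2 + ‖y‖ ^ 2 :=
  WithLp.prod_norm_sq_eq_of_L2 _

theorem norm_mk3_sq (x : X) (y : Y) (z : Z) :
    ‖mk3 x y z‖ ^ 2 = ‖x‖ ^ 2 + ‖y‖ ^ 2 + ‖z‖ ^ 2 := by
  rw [add_assoc, ← norm_mk2_sq y z]
  exact norm_mk2_sq x (mk2 y z)

end Norms

theorem norm_sq_add_norm_sq_of_adjoint_comp_add_adjoint_comp_eq_id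
    {𝕜 E F G : Type*} [RCLike 𝕜]
    [NormedAddCommGroup E] [InnerProductSpace 𝕜 E] [CompleteSpace E]
    [NormedAddCommGroup F] [InnerProductSpace 𝕜 F] [CompleteSpace F]
    [NormedAddCommGroup G] [InnerProductSpace 𝕜 G] [CompleteSpace G]
    {S : E →L[𝕜] F} {T : E →L[𝕜] G}
    (h : adjoint S ∘L S + adjoint T ∘L T = ContinuousLinearMap.id 𝕜 E) (v : E) :
    ‖S v‖ ^ 2 + ‖T v‖ ^ 2 = ‖v‖ ^ 2 := by
  have h' := congrArg (fun R : E →L[𝕜] E => (inner 𝕜 (R v) v : 𝕜)) h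
  simp only [add_apply, coe_id', comp_apply, id_eq, inner_add_left, adjoint_inner_left,
    inner_self_eq_norm_sq_to_K] at h'
  exact_mod_cast h'

theorem isometry_of_norm_mk2_sq {𝕜 X Y : Type*} [RCLike 𝕜]
    [SeminormedAddCommGroup X] [NormedSpace 𝕜 X] [SeminormedAddCommGroup Y] [NormedSpace 𝕜 Y]
    (V : WithLp 2 (X × Y) →L[𝕜] WithLp 2 (X × Y))
    (hV : ∀ x y, ‖V (mk2 x y)‖ ^ 2 = ‖x‖ ^ 2 + ‖y‖ ^ 2) : Isometry V := by
  refine AddMonoidHomClass.isometry_of_norm V fun p => ?_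
  have hp : ‖V (mk2 p.fst p.snd)‖ ^ 2 = ‖mk2 p.fst p.snd‖ ^ 2 := by rw [hV, norm_mk2_sq]
  exact (pow_left_inj₀ (norm_nonneg _) (norm_nonneg _) two_ne_zero).mp hp

theorem statement11_general
    {E H₁ H₂ : Type*}
    [NormedAddCommGroup E] [InnerProductSpace ℂ E] [CompleteSpace E]
    [NormedAddCommGroup H₁] [InnerProductSpace ℂ H₁] [CompleteSpace H₁]
    [NormedAddCommGroup H₂] [InnerProductSpace ℂ H₂]
    (A : E →L[ℂ] E) (B₁ : H₁ →L[ℂ] E) (B₂ : H₂ →L[ℂ] E)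
    (C₁ : E →L[ℂ] H₁) (C₂ : E →L[ℂ] H₂)
    (D₁ : H₁ →L[ℂ] H₁) (D₂ : H₂ →L[ℂ] H₁) (D₃ : H₂ →L[ℂ] H₂)
    (A₁ A₂ : E →L[ℂ] E) (X₁ : E →L[ℂ] H₁) (Y₂ : H₂ →L[ℂ] E)
    (U : WithLp 2 (E × WithLp 2 (H₁ × H₂)) →L[ℂ] WithLp 2 (E × WithLp 2 (H₁ × H₂)))
    (hU : ∀ (e : E) (h₁ : H₁) (h₂ : H₂),
      U (mk3 e h₁ h₂) =
        mk3 (A e + B₁ h₁ + B₂ h₂) (C₁ e + D₁ h₁ + D₂ h₂) (C₂ e + D₃ h₂))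
    (hIso : Isometry U)
    (hA : A = A₁ ∘L A₂) (hB₂ : B₂ = A₁ ∘L Y₂)
    (hC₁ : C₁ = X₁ ∘L A₂) (hD₂ : D₂ = X₁ ∘L Y₂)
    (hA₁X₁ : adjoint A₁ ∘L A₁ + adjoint X₁ ∘L X₁ = ContinuousLinearMap.id ℂ E)
    (U₂ : WithLp 2 (E × H₂) →L[ℂ] WithLp 2 (E × H₂))
    (hU₂ : ∀ (e : E) (h₂ : H₂), U₂ (mk2 e h₂) = mk2 (A₂ e + Y₂ h₂) (C₂ e + D₃ h₂)) :
    Isometry U₂ := by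
  refine isometry_of_norm_mk2_sq U₂ fun e h₂ => ?_
  set w := A₂ e + Y₂ h₂
  have hUe : U (mk3 e 0 h₂) = mk3 (A₁ w) (X₁ w) (C₂ e + D₃ h₂) := by
    simp only [hU, hA, hB₂, hC₁, hD₂, comp_apply, map_zero, add_zero, w, map_add]
  have hnorm : ‖U (mk3 e 0 h₂)‖ ^ 2 = ‖mk3 e (0 : H₁) h₂‖ ^ 2 := by
    rw [hIso.norm_map_of_map_zero (map_zero U)]
  rw [hUe, norm_mk3_sq, norm_mk3_sq,
    norm_sq_add_norm_sq_of_adjoint_comp_add_adjoint_comp_eq_id hA₁X₁, norm_zero] at hnorm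
  rw [hU₂, norm_mk2_sq]
  linarith

/-- Suppose
`U(e, h₁, h₂) = (A e + B₁ h₁ + B₂ h₂, C₁ e + D₁ h₁ + D₂ h₂, C₂ e + D₃ h₂)` is an
isometry, `A = A₁ A₂`, `B₂ = A₁ Y₂`, `C₁ = X₁ A₂`, `D₂ = X₁ Y₂` and
`A₁*A₁ + X₁*X₁ = I`.  Then `U₂(e, h₂) = (A₂ e + Y₂ h₂, C₂ e + D₃ h₂)` is an
isometry on `E ⊕ H₂`. -/
theorem statement11
    {E H₁ H₂ : Type*}
    [NormedAddCommGroup E] [InnerProductSpace ℂ E] [CompleteSpace E]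
    [NormedAddCommGroup H₁] [InnerProductSpace ℂ H₁] [CompleteSpace H₁]
    [NormedAddCommGroup H₂] [InnerProductSpace ℂ H₂] [CompleteSpace H₂]
    (A : E →L[ℂ] E) (B₁ : H₁ →L[ℂ] E) (B₂ : H₂ →L[ℂ] E)
    (C₁ : E →L[ℂ] H₁) (C₂ : E →L[ℂ] H₂)
    (D₁ : H₁ →L[ℂ] H₁) (D₂ : H₂ →L[ℂ] H₁) (D₃ : H₂ →L[ℂ] H₂)
    (A₁ A₂ : E →L[ℂ] E) (X₁ : E →L[ℂ] H₁) (Y₂ : H₂ →L[ℂ] E)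
    (U : WithLp 2 (E × WithLp 2 (H₁ × H₂)) →L[ℂ] WithLp 2 (E × WithLp 2 (H₁ × H₂)))
    (hU : ∀ (e : E) (h₁ : H₁) (h₂ : H₂),
      U (mk3 e h₁ h₂) =
        mk3 (A e + B₁ h₁ + B₂ h₂) (C₁ e + D₁ h₁ + D₂ h₂) (C₂ e + D₃ h₂))
    (hIso : Isometry U)
    (hA : A = A₁ ∘L A₂) (hB₂ : B₂ = A₁ ∘L Y₂)
    (hC₁ : C₁ = X₁ ∘L A₂) (hD₂ : D₂ = X₁ ∘L Y₂)
    (hA₁X₁ : adjoint A₁ ∘L A₁ + adjoint X₁ ∘L X₁ = ContinuousLinearMap.id ℂ E)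
    (U₂ : WithLp 2 (E × H₂) →L[ℂ] WithLp 2 (E × H₂))
    (hU₂ : ∀ (e : E) (h₂ : H₂), U₂ (mk2 e h₂) = mk2 (A₂ e + Y₂ h₂) (C₂ e + D₃ h₂)) :
    Isometry U₂ :=
  statement11_general A B₁ B₂ C₁ C₂ D₁ D₂ D₃ A₁ A₂ X₁ Y₂ U hU hIso hA hB₂ hC₁ hD₂ hA₁X₁ U₂ hU₂
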